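/- arXiv:0707.2851 — 3 statements merged into one kernel-verified Lean document; each statement's English description precedes it below -/
import Mathlib

section
/- With A, Ā, X as defined over a commutative ℚ-algebra R, one has z·∑_{m≥1} (X_m/m)·t^m = log A(t); equivalently, substituting the series L(t) = ∑_{m≥1} (z·X_m/m)·t^m (which has zero constant term) into the exponential power series exp gives exp(L(t)) = A(t) = 1 + z·∑_{i≥1} A_i·t^i in R⟦t⟧. -/
/-
Write `α = A(t)`, `β = Ā(t)` and `τ = t·α'`. The mirror recursion says `β - 1 = (α - 1) - (α - 1)(β - 1)`,
i.e. `α·β = 2α - 1`, and the definition of `X_m` says `t·L' = τ·(2 - β)`. Multiplying by `α` gives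
`α·t·L' = τ·(2α - αβ) = t·α'`, so `α' = L'·α`. The composite `exp(L)` satisfies the same linear ODE with
the same constant term `1`, and over a ℚ-algebra such an ODE has at most one power-series solution.
-/

open PowerSeries

/-- Composition `exp ∘ L` of the exponential power series with a power series `L`
having zero constant term, defined coefficient-wise: the `n`-th coefficient is
`∑_{k=0}^{n} (1/k!)·(coefficient of tⁿ in L^k)`.  (Since `L` has zero constant
term, `L^k` contributes nothing to the `n`-th coefficient for `k > n`.) -/
noncomputable def expComp {R : Type*} [CommRing R] [Algebra ℚ R] (L : PowerSeries R) :
    PowerSeries R :=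
  PowerSeries.mk fun n =>
    ∑ k ∈ Finset.range (n + 1), ((k.factorial : ℚ)⁻¹) • (PowerSeries.coeff n (L ^ k))

open Finset

namespace PowerSeries

section CommRing

variable {R : Type*} [CommRing R]

theorem coeff_X_mul_derivative (f : R⟦X⟧) (n : ℕ) : coeff n (X * d⁄dX R f) = n * coeff n f := by
  cases n with
  | zero => simp
  | succ n => rw [coeff_succ_X_mul, coeff_derivative]; push_cast; ring

theorem coeff_pow_eq_zero_of_lt {f : R⟦X⟧} (hf : constantCoeff f = 0) {n k : ℕ} (h : n < k) :
    coeff n (f ^ k) = 0 :=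
  X_pow_dvd_iff.mp (pow_dvd_pow_of_dvd (X_dvd_iff.mpr hf) k) n h

theorem coeff_mul_eq_sum_Ico {f g : R⟦X⟧} (hf : constantCoeff f = 0) (hg : constantCoeff g = 0)
    (n : ℕ) : coeff n (f * g) = ∑ k ∈ Ico 1 n, coeff k f * coeff (n - k) g := by
  rw [coeff_mul, Nat.sum_antidiagonal_eq_sum_range_succ_mk]
  refine (sum_subset (fun k hk => ?_) fun k hk hk' => ?_).symm
  · simp only [mem_Ico, mem_range] at hk ⊢; omega
  · simp only [mem_Ico, mem_range] at hk hk'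
    obtain rfl | rfl : k = 0 ∨ k = n := by omega
    · simp [hf]
    · simp [hg]

theorem sum_Ico_ite_mul_ite (f g : ℕ → R) (n : ℕ) :
    ∑ k ∈ Ico 1 n, (if k = 0 then 0 else f k) * (if n - k = 0 then 0 else g (n - k)) =
      ∑ k ∈ Ico 1 n, f k * g (n - k) :=
  sum_congr rfl fun k hk => by
    rw [mem_Ico] at hk
    rw [if_neg (by omega), if_neg (by omega)]

theorem eq_of_derivative_eq_mul [IsAddTorsionFree R] {D E F : R⟦X⟧} (hE : d⁄dX R E = D * E)
    (hF : d⁄dX R F = D * F) (h0 : constantCoeff E = constantCoeff F) : E = F := by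
  ext n
  induction n using Nat.strong_induction_on with
  | _ n ih =>
    cases n with
    | zero => simpa using h0
    | succ n =>
      have hcoeff : ∀ G : R⟦X⟧, d⁄dX R G = D * G →
          (n + 1) • coeff (n + 1) G = ∑ p ∈ antidiagonal n, coeff p.1 D * coeff p.2 G := by
        intro G hG
        rw [← coeff_mul, ← hG, coeff_derivative, nsmul_eq_mul, mul_comm]
        push_cast; rfl
      refine nsmul_right_injective n.succ_ne_zero ?_
      simp only [hcoeff E hE, hcoeff F hF]
      refine sum_congr rfl fun p hp => ?_
      rw [ih p.2 (Nat.lt_succ_of_le (HasAntidiagonal.antidiagonal.snd_le hp))]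

end CommRing

section ExpComp

variable {R : Type*} [CommRing R] [Algebra ℚ R]

noncomputable def expTrunc (N : ℕ) (L : R⟦X⟧) : R⟦X⟧ :=
  ∑ k ∈ range (N + 1), (k.factorial : ℚ)⁻¹ • L ^ k

theorem constantCoeff_expComp (L : R⟦X⟧) : constantCoeff (expComp L) = 1 := by
  simp [expComp]

theorem coeff_expComp_eq_coeff_expTrunc {L : R⟦X⟧} (hL : constantCoeff L = 0) {n N : ℕ}
    (h : n ≤ N) : coeff n (expComp L) = coeff n (expTrunc N L) := by
  rw [expComp, coeff_mk, expTrunc, map_sum]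
  refine sum_subset (range_subset_range.mpr (by omega)) fun k _ hk => ?_
  simp only [mem_range, not_lt] at hk
  rw [coeff_pow_eq_zero_of_lt hL (by omega), smul_zero]

theorem derivative_expTrunc_succ (N : ℕ) (L : R⟦X⟧) :
    d⁄dX R (expTrunc (N + 1) L) = d⁄dX R L * expTrunc N L := by
  rw [expTrunc, expTrunc, map_sum, sum_range_succ', mul_sum]
  simp only [pow_zero, map_rat_smul, derivative_one, smul_zero, add_zero]
  refine sum_congr rfl fun k _ => ?_
  have hscalar : ((k + 1).factorial : ℚ)⁻¹ * (k + 1 : ℕ) = (k.factorial : ℚ)⁻¹ := by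
    rw [Nat.factorial_succ]; push_cast; field_simp
  rw [derivative_pow, Nat.add_sub_cancel, ← nsmul_eq_mul, smul_mul_assoc,
    ← Nat.cast_smul_eq_nsmul ℚ, smul_smul, hscalar, mul_smul_comm, mul_comm]

theorem derivative_expComp {L : R⟦X⟧} (hL : constantCoeff L = 0) :
    d⁄dX R (expComp L) = d⁄dX R L * expComp L := by
  ext n
  have htrunc : ∀ p ∈ antidiagonal n, coeff p.1 (d⁄dX R L) * coeff p.2 (expTrunc n L) =
      coeff p.1 (d⁄dX R L) * coeff p.2 (expComp L) := fun p hp => by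
    rw [coeff_expComp_eq_coeff_expTrunc hL (HasAntidiagonal.antidiagonal.snd_le hp)]
  rw [coeff_derivative, coeff_expComp_eq_coeff_expTrunc hL le_rfl, ← coeff_derivative,
    derivative_expTrunc_succ, coeff_mul, coeff_mul, sum_congr rfl htrunc]

theorem X_mul_derivative_mk_inv_smul (c : ℕ → R) :
    X * d⁄dX R (mk fun m => if m = 0 then 0 else (m : ℚ)⁻¹ • c m) =
      mk fun m => if m = 0 then 0 else c m := by
  ext m
  rw [coeff_X_mul_derivative, coeff_mk, coeff_mk]
  split_ifs with hm
  · simp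
  · rw [← nsmul_eq_mul, ← Nat.cast_smul_eq_nsmul ℚ, smul_smul,
      mul_inv_cancel₀ (by exact_mod_cast hm), one_smul]

end ExpComp

end PowerSeries

section Skein

variable {R : Type*} [CommRing R] (z : R)

/-- The series `A(t)` of the paper, for the sequence `a = A`. -/
noncomputable def skeinSeries (a : ℕ → R) : R⟦X⟧ :=
  mk fun n => if n = 0 then 1 else z * a n

theorem coeff_skeinSeries_sub_one (a : ℕ → R) (n : ℕ) :
    coeff n (skeinSeries z a - 1) = if n = 0 then 0 else z * a n := by
  rcases n with _ | n <;> simp [skeinSeries, coeff_one]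

theorem constantCoeff_skeinSeries (a : ℕ → R) : constantCoeff (skeinSeries z a) = 1 := by
  simp [skeinSeries]

theorem constantCoeff_skeinSeries_sub_one (a : ℕ → R) :
    constantCoeff (skeinSeries z a - 1) = 0 := by
  simp [constantCoeff_skeinSeries]

variable {z} {A Abar : ℕ → R}

theorem skeinSeries_mul_mirror
    (hAbar : ∀ m, 1 ≤ m → Abar m = A m - z * ∑ k ∈ Ico 1 m, A k * Abar (m - k)) :
    skeinSeries z A * skeinSeries z Abar = 2 * skeinSeries z A - 1 := by
  suffices h : skeinSeries z Abar - 1 =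
      (skeinSeries z A - 1) - (skeinSeries z A - 1) * (skeinSeries z Abar - 1) by
    linear_combination h
  ext n
  rw [coeff_skeinSeries_sub_one, map_sub, coeff_mul_eq_sum_Ico
    (constantCoeff_skeinSeries_sub_one z A) (constantCoeff_skeinSeries_sub_one z Abar)]
  simp only [coeff_skeinSeries_sub_one]
  split_ifs with hn
  · simp [hn]
  · rw [sum_Ico_ite_mul_ite (fun k => z * A k) (fun k => z * Abar k), hAbar n (by omega)]
    simp only [mul_sub, mul_sum]
    ring_nf

theorem X_mul_derivative_skeinSeries_mul_two_sub {x : ℕ → R}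
    (hx : ∀ m, 1 ≤ m → x m = m * A m - z * ∑ j ∈ Ico 1 m, (j : R) * A j * Abar (m - j)) :
    X * d⁄dX R (skeinSeries z A) * (2 - skeinSeries z Abar) =
      PowerSeries.mk fun n => if n = 0 then 0 else z * x n := by
  set τ := X * d⁄dX R (skeinSeries z A)
  have hτ : ∀ k, coeff k τ = if k = 0 then 0 else k * (z * A k) := fun k => by
    rw [coeff_X_mul_derivative, skeinSeries, coeff_mk]
    split_ifs with hk <;> simp [hk]
  have hτ0 : constantCoeff τ = 0 := by simpa using hτ 0
  rw [show τ * (2 - skeinSeries z Abar) = τ - τ * (skeinSeries z Abar - 1) by ring]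
  ext n
  rw [map_sub, coeff_mul_eq_sum_Ico hτ0 (constantCoeff_skeinSeries_sub_one z Abar), coeff_mk]
  simp only [hτ, coeff_skeinSeries_sub_one]
  split_ifs with hn
  · simp [hn]
  · rw [sum_Ico_ite_mul_ite (fun k => k * (z * A k)) (fun k => z * Abar k), hx n (by omega)]
    simp only [mul_sub, mul_sum]
    ring_nf

end Skein

/-- With `Abar` defined from `A` by the mirror recursion and
`X_m = m·A_m − z·∑_{j=1}^{m−1} j·A_j·Ā_{m−j}`, over a commutative ℚ-algebra `R`
one has `z·∑_{m≥1} (X_m/m)·t^m = log A(t)`; equivalently, substituting the series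
`L(t) = ∑_{m≥1} (z·X_m/m)·t^m` (with zero constant term) into the exponential
series gives `exp(L(t)) = A(t) = 1 + z·∑_{i≥1} A_i·t^i` in `R⟦t⟧`. -/
theorem skein_exp_of_power_sum_series_eq_A {R : Type*} [CommRing R] [Algebra ℚ R]
    (z : R) (A Abar X : ℕ → R)
    (hAbar : ∀ m : ℕ, 1 ≤ m →
      Abar m = A m - z * ∑ k ∈ Finset.Ico 1 m, A k * Abar (m - k))
    (hX : ∀ m : ℕ, 1 ≤ m →
      X m = (m : R) * A m - z * ∑ j ∈ Finset.Ico 1 m, (j : R) * A j * Abar (m - j)) :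
    expComp (PowerSeries.mk fun m => if m = 0 then 0 else ((m : ℚ)⁻¹) • (z * X m)) =
      (PowerSeries.mk fun n => if n = 0 then 1 else z * A n) := by
  set L : R⟦X⟧ := PowerSeries.mk fun m => if m = 0 then 0 else ((m : ℚ)⁻¹) • (z * X m)
  set α := skeinSeries z A
  have hL0 : constantCoeff L = 0 := by simp [L]
  have hXL : PowerSeries.X * d⁄dX R L =
      PowerSeries.X * d⁄dX R α * (2 - skeinSeries z Abar) := by
    rw [X_mul_derivative_mk_inv_smul, X_mul_derivative_skeinSeries_mul_two_sub hX]
  have hα : d⁄dX R α = d⁄dX R L * α := X_mul_cancel <| by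
    linear_combination (-α) * hXL + PowerSeries.X * d⁄dX R α * skeinSeries_mul_mirror hAbar
  have : IsAddTorsionFree R := .of_module_rat R
  exact eq_of_derivative_eq_mul (derivative_expComp hL0) hα
    ((constantCoeff_expComp L).trans (constantCoeff_skeinSeries z A).symm)
end

section
/- With A, Ā, X as defined over a commutative ℚ-algebra R, for every m ≥ 1 one has X_m = m·∑_{c ⊨ m} ((−z)^{ℓ(c)−1}/ℓ(c))·A_{c_1}·A_{c_2}⋯A_{c_{ℓ(c)}}, the sum being over all compositions c of m. Equivalently, grouping compositions with the same underlying partition, X_m = m·∑_{λ ⊢ m} (k_λ/l)·(−z)^{l−1}·A_λ, where l is the length of λ. -/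
/-!
Unwinding the mirror recursion by the first block gives `Ā_m = ∑_{c ⊨ m} (-z)^{ℓ(c)-1} A_c`, and
the same first-block expansion turns the defining formula of `X_m` into `∑_{c ⊨ m} c₁ (-z)^{ℓ(c)-1} A_c`.
The weight `(-z)^{ℓ(c)-1} A_c` is invariant under cyclic rotation of `c`, and rotation permutes the
compositions of `m`; averaging the first block `c₁` over the `ℓ(c)` rotations of `c` replaces it by
`m / ℓ(c)`.
-/

open Finset

theorem List.sum_range_headI_rotate (l : List ℕ) :
    ∑ k ∈ Finset.range l.length, (l.rotate k).headI = l.sum := by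
  rw [← Fin.sum_univ_eq_sum_range (fun k => (l.rotate k).headI), ← Fin.sum_univ_getElem l]
  refine Finset.sum_congr rfl fun i _ => ?_
  rw [← List.getI_zero_eq_headI, List.getI_eq_getElem _ (by simpa using i.pos), List.getElem_rotate]
  simp [Nat.mod_eq_of_lt i.isLt]

namespace Composition

variable {n : ℕ}

lemma sum_univ_zero {M : Type*} [AddCommMonoid M] (f : List ℕ → M) :
    ∑ c : Composition 0, f c.blocks = f [] := by
  simp [fun c : Composition 0 => c.blocks_eq_nil.2 rfl, composition_card]

def cons (k : ℕ) (hk : 0 < k) (hkn : k ≤ n) (c : Composition (n - k)) : Composition n where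
  blocks := k :: c.blocks
  blocks_pos hi := by
    rcases List.mem_cons.1 hi with rfl | hi
    exacts [hk, c.blocks_pos hi]
  blocks_sum := by rw [List.sum_cons, c.blocks_sum]; omega

def tail (c : Composition n) : Composition (n - c.blocks.headI) where
  blocks := c.blocks.tail
  blocks_pos hi := c.blocks_pos (List.mem_of_mem_tail hi)
  blocks_sum := by have := c.blocks.headI_add_tail_sum; rw [c.blocks_sum] at this; omega

theorem sum_eq_sum_Icc_sum_cons {M : Type*} [AddCommMonoid M] (f : List ℕ → M) (hn : 0 < n) :
    ∑ c : Composition n, f c.blocks =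
      ∑ k ∈ Icc 1 n, ∑ c : Composition (n - k), f (k :: c.blocks) := by
  rw [Finset.sum_sigma']
  symm
  refine Finset.sum_bij' (fun x hx => cons x.1 (by simp at hx; omega) (by simp at hx; omega) x.2)
    (fun c _ => ⟨c.blocks.headI, c.tail⟩) (fun _ _ => mem_univ _) (fun c _ => ?_)
    (fun x _ => rfl) (fun c _ => ?_) (fun _ _ => rfl)
  all_goals obtain ⟨b, t, hc⟩ := List.exists_cons_of_ne_nil (c.blocks_eq_nil.not.2 hn.ne')
  · have hb : 0 < b := c.blocks_pos (by simp [hc])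
    have := c.blocks_sum
    simp only [hc, List.sum_cons] at this
    simp [hc]; omega
  · ext1; simp [cons, tail, hc]

theorem sum_eq_add_sum_cons {M : Type*} [AddCommMonoid M] (f : List ℕ → M) (hn : 0 < n) :
    ∑ c : Composition n, f c.blocks =
      f [n] + ∑ k ∈ Ico 1 n, ∑ c : Composition (n - k), f (k :: c.blocks) := by
  rw [sum_eq_sum_Icc_sum_cons f hn, ← Ico_add_one_right_eq_Icc, Finset.sum_Ico_succ_top hn,
    add_comm, Nat.sub_self, sum_univ_zero fun l => f (n :: l)]

def rotate (c : Composition n) (k : ℕ) : Composition n where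
  blocks := c.blocks.rotate k
  blocks_pos hi := c.blocks_pos ((c.blocks.rotate_perm k).mem_iff.1 hi)
  blocks_sum := (c.blocks.rotate_perm k).sum_eq.trans c.blocks_sum

@[simp] lemma rotate_blocks (c : Composition n) (k : ℕ) : (c.rotate k).blocks = c.blocks.rotate k :=
  rfl

@[simp] lemma length_rotate (c : Composition n) (k : ℕ) : (c.rotate k).length = c.length :=
  List.length_rotate _ _

lemma rotate_bijective (k : ℕ) : Function.Bijective fun c : Composition n => c.rotate k :=
  Finite.injective_iff_bijective.1 fun _ _ h =>
    Composition.ext (List.rotate_injective k (congrArg blocks h))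

theorem sum_length_mul_headI_smul {M : Type*} [AddCommMonoid M] (f : Composition n → M)
    (hf : ∀ c k, f (c.rotate k) = f c) :
    ∑ c, (c.length * c.blocks.headI) • f c = n • ∑ c, f c := by
  have swap (c : Composition n) (k : ℕ) :
      c ∈ univ ∧ k ∈ range c.length ↔ c ∈ univ.filter (k < ·.length) ∧ k ∈ range n := by
    have := c.length_le
    simp only [mem_univ, mem_range, mem_filter, true_and]
    omega
  calc ∑ c, (c.length * c.blocks.headI) • f c
      = ∑ c, ∑ k ∈ range c.length, c.blocks.headI • f c := by
        simp only [sum_const, card_range, mul_smul]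
    _ = ∑ k ∈ range n, ∑ c with k < c.length, c.blocks.headI • f c := sum_comm' swap
    _ = ∑ k ∈ range n, ∑ c with k < c.length, (c.rotate k).blocks.headI • f c := by
        refine Finset.sum_congr rfl fun k _ => ?_
        simp only [Finset.sum_filter]
        rw [← (rotate_bijective k).sum_comp]
        simp [hf]
    _ = ∑ c, ∑ k ∈ range c.length, (c.rotate k).blocks.headI • f c := (sum_comm' swap).symm
    _ = n • ∑ c, f c := by
        rw [smul_sum]
        refine Finset.sum_congr rfl fun c _ => ?_
        rw [← Finset.sum_smul]
        exact congrArg (· • f c) (c.blocks.sum_range_headI_rotate.trans c.blocks_sum)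

end Composition

namespace SkeinAnnulus

variable {R : Type*} [CommRing R] {z : R} {A : ℕ → R}

def weight (z : R) (A : ℕ → R) (l : List ℕ) : R := (-z) ^ (l.length - 1) * (l.map A).prod

lemma weight_singleton (k : ℕ) : weight z A [k] = A k := by simp [weight]

lemma weight_cons (k : ℕ) {l : List ℕ} (hl : l ≠ []) :
    weight z A (k :: l) = -z * (A k * weight z A l) := by
  obtain ⟨n, hn⟩ := Nat.exists_eq_add_one.2 (List.length_pos_iff.2 hl)
  simp only [weight, List.length_cons, List.map_cons, List.prod_cons, hn, Nat.add_sub_cancel,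
    pow_succ]
  ring

lemma weight_rotate (l : List ℕ) (k : ℕ) : weight z A (l.rotate k) = weight z A l := by
  simp only [weight, List.length_rotate, ((l.rotate_perm k).map A).prod_eq]

theorem sum_apply_headI_mul_weight (g : ℕ → R) {m : ℕ} (hm : 0 < m) :
    ∑ c : Composition m, g c.blocks.headI * weight z A c.blocks =
      g m * A m - z * ∑ k ∈ Ico 1 m, g k * A k * ∑ c : Composition (m - k), weight z A c.blocks := by
  rw [Composition.sum_eq_add_sum_cons (fun l => g l.headI * weight z A l) hm, weight_singleton,
    sub_eq_add_neg, neg_mul_eq_neg_mul, mul_sum]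
  congr 1
  refine sum_congr rfl fun k hk => ?_
  have hmk : 0 < m - k := by simp only [mem_Ico] at hk; omega
  simp only [List.headI_cons, mul_sum]
  refine sum_congr rfl fun c _ => ?_
  rw [weight_cons k (c.blocks_eq_nil.not.2 hmk.ne')]
  ring

theorem eq_sum_weight_of_mirror_recursion {Abar : ℕ → R}
    (hAbar : ∀ m : ℕ, 1 ≤ m →
      Abar m = A m - z * ∑ k ∈ Ico 1 m, A k * Abar (m - k)) :
    ∀ m : ℕ, 1 ≤ m → Abar m = ∑ c : Composition m, weight z A c.blocks := by
  intro m
  induction m using Nat.strong_induction_on with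
  | _ m ih =>
    intro hm
    have expand : ∑ c : Composition m, weight z A c.blocks =
        A m - z * ∑ k ∈ Ico 1 m, A k * ∑ c : Composition (m - k), weight z A c.blocks := by
      simpa only [one_mul] using sum_apply_headI_mul_weight (z := z) (A := A) (fun _ => 1) hm
    rw [expand, hAbar m hm]
    congr 2
    refine sum_congr rfl fun k hk => ?_
    simp only [mem_Ico] at hk
    rw [ih (m - k) (by omega) (by omega)]

theorem eq_sum_headI_mul_weight {Abar X : ℕ → R}
    (hAbar : ∀ m : ℕ, 1 ≤ m →
      Abar m = A m - z * ∑ k ∈ Ico 1 m, A k * Abar (m - k))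
    (hX : ∀ m : ℕ, 1 ≤ m →
      X m = (m : R) * A m - z * ∑ j ∈ Ico 1 m, (j : R) * A j * Abar (m - j))
    {m : ℕ} (hm : 1 ≤ m) :
    X m = ∑ c : Composition m, (c.blocks.headI : R) * weight z A c.blocks := by
  rw [sum_apply_headI_mul_weight Nat.cast hm, hX m hm]
  congr 2
  refine sum_congr rfl fun k hk => ?_
  simp only [mem_Ico] at hk
  rw [eq_sum_weight_of_mirror_recursion hAbar (m - k) (by omega)]

theorem sum_headI_mul_weight [Algebra ℚ R] {m : ℕ} (hm : 0 < m) :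
    ∑ c : Composition m, (c.blocks.headI : R) * weight z A c.blocks =
      m * ∑ c : Composition m, (c.length : ℚ)⁻¹ • weight z A c.blocks := by
  rw [← nsmul_eq_mul, ← Composition.sum_length_mul_headI_smul _
    fun c k => by simp only [Composition.length_rotate, Composition.rotate_blocks, weight_rotate]]
  refine sum_congr rfl fun c _ => ?_
  have hlen : (c.length : ℚ) ≠ 0 := Nat.cast_ne_zero.2 (c.length_pos_iff.2 hm).ne'
  rw [mul_comm c.length, mul_smul, ← Nat.cast_smul_eq_nsmul ℚ c.length, smul_inv_smul₀ hlen,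
    nsmul_eq_mul]

end SkeinAnnulus

open SkeinAnnulus in
/-- With `Abar` defined from `A` by the mirror recursion and
`X_m = m·A_m − z·∑_{j=1}^{m−1} j·A_j·Ā_{m−j}`, over a commutative ℚ-algebra `R`
one has, for every `m ≥ 1`,
`X_m = m·∑_{c ⊨ m} ((−z)^{ℓ(c)−1}/ℓ(c))·A_{c_1}⋯A_{c_{ℓ(c)}}`, summed over all
compositions `c` of `m` (equivalently, grouping compositions with the same
underlying partition, `X_m = m·∑_{λ ⊢ m} (k_λ/l)·(−z)^{l−1}·A_λ`). -/
theorem skein_Xm_in_Turaev_basis {R : Type*} [CommRing R] [Algebra ℚ R]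
    (z : R) (A Abar X : ℕ → R)
    (hAbar : ∀ m : ℕ, 1 ≤ m →
      Abar m = A m - z * ∑ k ∈ Finset.Ico 1 m, A k * Abar (m - k))
    (hX : ∀ m : ℕ, 1 ≤ m →
      X m = (m : R) * A m - z * ∑ j ∈ Finset.Ico 1 m, (j : R) * A j * Abar (m - j)) :
    ∀ m : ℕ, 1 ≤ m →
      X m = (m : R) * ∑ c : Composition m,
        ((c.length : ℚ)⁻¹) • ((-z) ^ (c.length - 1) * (c.blocks.map A).prod) := by
  intro m hm
  rw [eq_sum_headI_mul_weight hAbar hX hm, sum_headI_mul_weight hm]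
  rfl
end

section
/- For every m ≥ 1 one has ∑_{i+j=m, i,j≥0} (−1)^j·s^{i−j}·h_i·e_j = (s − s⁻¹)·∑_{a+b=m−1, a,b≥0} (−1)^b·s^{a−b}·S_{(a|b)}. (In the Homfly skein of the annulus, where z·A_m = ∑_{i+j=m}(−1)^j s^{i−j} h_i e_j with z = s−s⁻¹, this says that the closed braid A_m equals ∑_{a+b=m−1} (−1)^b·s^{a−b}·Q_{(a|b)}, an alternating sum of the hook Schur elements.) -/
/-!
Expanding each hook `S_{(a|b)} = ∑_{k+j=b} (-1)^k h_{a+1+k} e_j` and collecting terms by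
`i = a+1+k`, the right-hand side becomes
`∑_{i+j=m} (-1)^j h_i e_j · s^{-j} (s - s⁻¹) ∑_{a+k=i-1} s^a s^{-k}`,
and the geometric sum telescopes to `s^i - s^{-i}`. The `s^{-i}` parts add up to
`s^{-m} ∑_{i+j=m} (-1)^j h_i e_j`, which vanishes because `H(t) E(-t) = 1`.
-/

/-- The hook Schur element `S_{(a|b)} = ∑_{k=0}^{b} (−1)^k·h_{a+1+k}·e_{b−k}`
for `a, b ≥ 0` (the Schur function of the hook partition `(a|b)` of `a+b+1`),
and `S_{(a|b)} = 0` if `a < 0` or `b < 0`. -/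
def Shook {R : Type*} [CommRing R] (h e : ℕ → R) (a b : ℤ) : R :=
  if 0 ≤ a ∧ 0 ≤ b then
    ∑ k ∈ Finset.range (b.toNat + 1), (-1) ^ k * h (a.toNat + 1 + k) * e (b.toNat - k)
  else 0

open Finset

namespace Finset.Nat

theorem sum_antidiagonal_sum_antidiagonal_snd {M : Type*} [AddCommMonoid M]
    (f : ℕ → ℕ → ℕ → M) (n : ℕ) :
    ∑ p ∈ antidiagonal n, ∑ q ∈ antidiagonal p.2, f p.1 q.1 q.2 =
      ∑ p ∈ antidiagonal n, ∑ q ∈ antidiagonal p.1, f q.1 q.2 p.2 := by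
  rw [sum_sigma', sum_sigma']
  refine sum_nbij' (fun x => ⟨(x.1.1 + x.2.1, x.2.2), (x.1.1, x.2.1)⟩)
    (fun x => ⟨(x.2.1, x.2.2 + x.1.2), (x.2.2, x.1.2)⟩) ?_ ?_ ?_ ?_ ?_ <;>
  rintro ⟨⟨a, b⟩, ⟨c, d⟩⟩ hx <;>
  simp_all [HasAntidiagonal.mem_antidiagonal] <;>
  omega

theorem sub_mul_sum_antidiagonal_pow_mul_pow {R : Type*} [CommRing R] (x y : R) (n : ℕ) :
    (x - y) * ∑ p ∈ antidiagonal n, x ^ p.1 * y ^ p.2 = x ^ (n + 1) - y ^ (n + 1) := by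
  rw [sum_antidiagonal_eq_sum_range_succ (fun i j => x ^ i * y ^ j),
    ← (Commute.all x y).mul_geom_sum₂ (n + 1)]
  simp

end Finset.Nat

theorem Shook_natCast {R : Type*} [CommRing R] (h e : ℕ → R) (a b : ℕ) :
    Shook h e a b = ∑ q ∈ antidiagonal b, (-1) ^ q.1 * h (a + 1 + q.1) * e q.2 := by
  simp [Shook,
    Nat.sum_antidiagonal_eq_sum_range_succ (fun k j => (-1 : R) ^ k * h (a + 1 + k) * e j)]

theorem neg_one_pow_mul_pow_mul_pow_mul_Shook {R : Type*} [CommRing R] (x y : R)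
    (h e : ℕ → R) (a b : ℕ) :
    (-1) ^ b * x ^ a * y ^ b * Shook h e a b =
      ∑ q ∈ antidiagonal b,
        x ^ a * y ^ q.1 * (y ^ q.2 * ((-1) ^ q.2 * h (a + 1 + q.1) * e q.2)) := by
  rw [Shook_natCast, mul_sum]
  refine sum_congr rfl fun q hq => ?_
  have hsign : ((-1 : R) ^ q.1) * (-1) ^ q.1 = 1 := by rw [← mul_pow]; norm_num
  rw [← HasAntidiagonal.mem_antidiagonal.mp hq]
  linear_combination (-1) ^ q.2 * x ^ a * y ^ (q.1 + q.2) * h (a + 1 + q.1) * e q.2 * hsign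

theorem sum_antidiagonal_pow_mul_pow_mul_of_sum_eq_zero {R : Type*} [CommRing R] (x y : R)
    (F : ℕ → ℕ → R) (n : ℕ) (hF : ∑ p ∈ antidiagonal (n + 1), F p.1 p.2 = 0) :
    ∑ p ∈ antidiagonal (n + 1), x ^ p.1 * y ^ p.2 * F p.1 p.2 =
      (x - y) * ∑ p ∈ antidiagonal n,
        ∑ q ∈ antidiagonal p.1, x ^ q.1 * y ^ q.2 * (y ^ p.2 * F (p.1 + 1) p.2) := by
  have hy : ∀ p ∈ antidiagonal (n + 1), x ^ p.1 * y ^ p.2 * F p.1 p.2 =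
      (x ^ p.1 - y ^ p.1) * y ^ p.2 * F p.1 p.2 + y ^ (n + 1) * F p.1 p.2 := by
    intro p hp
    rw [← HasAntidiagonal.mem_antidiagonal.mp hp]
    ring
  rw [sum_congr rfl hy, sum_add_distrib, ← mul_sum, hF, mul_zero, add_zero,
    Nat.sum_antidiagonal_succ, mul_sum]
  simp only [pow_zero, sub_self, zero_mul, zero_add]
  refine sum_congr rfl fun p _ => ?_
  rw [← sum_mul, ← mul_assoc, Nat.sub_mul_sum_antidiagonal_pow_mul_pow, mul_assoc]

theorem A_as_alternating_sum_of_hooks_general {R : Type*} [CommRing R] (s si : R)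
    (h e : ℕ → R)
    (hrel : ∀ n : ℕ, 1 ≤ n →
      ∑ p ∈ Finset.HasAntidiagonal.antidiagonal n, (-1) ^ p.2 * h p.1 * e p.2 = 0) :
    ∀ m : ℕ, 1 ≤ m →
      ∑ p ∈ Finset.HasAntidiagonal.antidiagonal m, (-1) ^ p.2 * s ^ p.1 * si ^ p.2 * h p.1 * e p.2 =
        (s - si) * ∑ p ∈ Finset.HasAntidiagonal.antidiagonal (m - 1),
          (-1) ^ p.2 * s ^ p.1 * si ^ p.2 * Shook h e (p.1 : ℤ) (p.2 : ℤ) := by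
  intro m hm
  obtain ⟨n, rfl⟩ := Nat.exists_eq_add_of_le' hm
  calc _ = ∑ p ∈ antidiagonal (n + 1), s ^ p.1 * si ^ p.2 * ((-1) ^ p.2 * h p.1 * e p.2) :=
        sum_congr rfl fun _ _ => by ring
    _ = (s - si) * ∑ p ∈ antidiagonal n, ∑ q ∈ antidiagonal p.1,
          s ^ q.1 * si ^ q.2 * (si ^ p.2 * ((-1) ^ p.2 * h (p.1 + 1) * e p.2)) :=
        sum_antidiagonal_pow_mul_pow_mul_of_sum_eq_zero s si
          (fun i j => (-1) ^ j * h i * e j) n (hrel (n + 1) (by omega))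
    _ = _ := by
      simp only [Nat.add_sub_cancel, neg_one_pow_mul_pow_mul_pow_mul_Shook]
      rw [Nat.sum_antidiagonal_sum_antidiagonal_snd
        (fun a k j => s ^ a * si ^ k * (si ^ j * ((-1) ^ j * h (a + 1 + k) * e j)))]
      refine congrArg _ (sum_congr rfl fun p _ => sum_congr rfl fun q hq => ?_)
      rw [← HasAntidiagonal.mem_antidiagonal.mp hq, add_right_comm]

/-- For every `m ≥ 1`,
`∑_{i+j=m} (−1)^j·s^{i−j}·h_i·e_j = (s − s⁻¹)·∑_{a+b=m−1} (−1)^b·s^{a−b}·S_{(a|b)}`,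
where `s` is a unit with inverse `si`, and `h, e` satisfy `h_0 = e_0 = 1` and
`∑_{i+j=n} (−1)^j·h_i·e_j = 0` for all `n ≥ 1` (i.e. `H(t)·E(−t) = 1`).  In the
skein this says `z·A_m = (s−s⁻¹)·∑_{a+b=m−1} (−1)^b s^{a−b} Q_{(a|b)}`. -/
theorem A_as_alternating_sum_of_hooks {R : Type*} [CommRing R] (s si : R)
    (hs : s * si = 1) (h e : ℕ → R) (h0 : h 0 = 1) (e0 : e 0 = 1)
    (hrel : ∀ n : ℕ, 1 ≤ n →
      ∑ p ∈ Finset.HasAntidiagonal.antidiagonal n, (-1) ^ p.2 * h p.1 * e p.2 = 0) :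
    ∀ m : ℕ, 1 ≤ m →
      ∑ p ∈ Finset.HasAntidiagonal.antidiagonal m, (-1) ^ p.2 * s ^ p.1 * si ^ p.2 * h p.1 * e p.2 =
        (s - si) * ∑ p ∈ Finset.HasAntidiagonal.antidiagonal (m - 1),
          (-1) ^ p.2 * s ^ p.1 * si ^ p.2 * Shook h e (p.1 : ℤ) (p.2 : ℤ) :=
  A_as_alternating_sum_of_hooks_general s si h e hrel
end
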